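/- Let (D, ≺, ≻) be a dendriform algebra, (V; ≺ₗ, ≻ₗ, ≺ᵣ, ≻ᵣ) a representation of D, and T : V → D a relative averaging operator. Equip D ⊕ V with the semidirect product dendriform structure (x,u) ≺⋉ (y,v) = (x≺y, x≺ₗv + u≺ᵣy), (x,u) ≻⋉ (y,v) = (x≻y, x≻ₗv + u≻ᵣy), let T̂(x,u) = (Tu, 0) be the associated averaging operator on D ⊕ V, and equip D ⊕ V with the quadri-dendriform structure induced by T̂ (namely a ≺⊢ b = T̂(a) ≺⋉ b, a ≺⊣ b = a ≺⋉ T̂(b), a ≻⊢ b = T̂(a) ≻⋉ b, a ≻⊣ b = a ≻⋉ T̂(b)). Equip V with the quadri-dendriform structure induced by T (namely u ≺⊢ᵀ v = Tu≺ₗv, u ≺⊣ᵀ v = u≺ᵣTv, u ≻⊢ᵀ v = Tu≻ₗv, u ≻⊣ᵀ v = u≻ᵣTv). Then the inclusion i : V → D ⊕ V, i(u) = (0, u), is an injective homomorphism of quadri-dendriform algebras, i.e. i(u ∗ᵀ v) = i(u) ∗ i(v) for each of the four operations ∗ ∈ {≺⊢, ≺⊣, ≻⊢, ≻⊣}. 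-/
import Mathlib


/-- A bilinear map between modules over `K`. -/
def IsBilin (K : Type*) [Field K] {A B C : Type*}
    [AddCommGroup A] [Module K A] [AddCommGroup B] [Module K B]
    [AddCommGroup C] [Module K C] (f : A → B → C) : Prop :=
  (∀ a a' b, f (a + a') b = f a b + f a' b) ∧
  (∀ (c : K) a b, f (c • a) b = c • f a b) ∧
  (∀ a b b', f a (b + b') = f a b + f a b') ∧
  (∀ (c : K) a b, f a (c • b) = c • f a b)

/-- A dendriform algebra structure `(D, ≺ = p, ≻ = s)`. -/
structure IsDendriform (K : Type*) [Field K] [CharZero K]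
    (D : Type*) [AddCommGroup D] [Module K D]
    (p s : D → D → D) : Prop where
  bil_p : IsBilin K p
  bil_s : IsBilin K s
  d1 : ∀ x y z, p (p x y) z = p x (p y z + s y z)
  d2 : ∀ x y z, p (s x y) z = s x (p y z)
  d3 : ∀ x y z, s x (s y z) = s (p x y + s x y) z

/-- A representation `(V; ≺ₗ = pl, ≻ₗ = sl, ≺ᵣ = pr, ≻ᵣ = sr)` of a dendriform
algebra `(D, p, s)`. -/
structure IsDendRep (K : Type*) [Field K] [CharZero K]
    (D : Type*) [AddCommGroup D] [Module K D]
    (V : Type*) [AddCommGroup V] [Module K V]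
    (p s : D → D → D)
    (pl sl : D → V → V) (pr sr : V → D → V) : Prop where
  bil_pl : IsBilin K pl
  bil_sl : IsBilin K sl
  bil_pr : IsBilin K pr
  bil_sr : IsBilin K sr
  r1 : ∀ x y u, pl (p x y) u = pl x (pl y u + sl y u)
  r2 : ∀ x y u, pl (s x y) u = sl x (pl y u)
  r3 : ∀ x y u, sl x (sl y u) = sl (p x y + s x y) u
  r4 : ∀ x u z, pr (pl x u) z = pl x (pr u z + sr u z)
  r5 : ∀ x u z, pr (sl x u) z = sl x (pr u z)
  r6 : ∀ x u z, sl x (sr u z) = sr (pl x u + sl x u) z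
  r7 : ∀ u y z, pr (pr u y) z = pr u (p y z + s y z)
  r8 : ∀ u y z, pr (sr u y) z = sr u (p y z)
  r9 : ∀ u y z, sr u (s y z) = sr (pr u y + sr u y) z

/-- A quadri-dendriform algebra `(D, ≺⊢ = pv, ≺⊣ = pd, ≻⊢ = sv, ≻⊣ = sd)`. -/
structure IsQuadriDendriform (K : Type*) [Field K] [CharZero K]
    (D : Type*) [AddCommGroup D] [Module K D]
    (pv pd sv sd : D → D → D) : Prop where
  bil_pv : IsBilin K pv
  bil_pd : IsBilin K pd
  bil_sv : IsBilin K sv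
  bil_sd : IsBilin K sd
  q1a : ∀ x y z, pv (pv x y) z = pv x (pv y z + sv y z)
  q1b : ∀ x y z, pv (pd x y) z = pv x (pv y z + sv y z)
  q2a : ∀ x y z, pv (sv x y) z = sv x (pv y z)
  q2b : ∀ x y z, pv (sd x y) z = sv x (pv y z)
  q3a : ∀ x y z, sv x (sv y z) = sv (pv x y + sv x y) z
  q3b : ∀ x y z, sv x (sv y z) = sv (pd x y + sd x y) z
  q3c : ∀ x y z, sv x (sv y z) = sv (pv x y + sd x y) z
  q3d : ∀ x y z, sv x (sv y z) = sv (pd x y + sv x y) z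
  q4 : ∀ x y z, pd (pv x y) z = pv x (pd y z + sd y z)
  q5 : ∀ x y z, pd (sv x y) z = sv x (pd y z)
  q6 : ∀ x y z, sv x (sd y z) = sd (pv x y + sv x y) z
  q7a : ∀ x y z, pd (pd x y) z = pd x (pv y z + sv y z)
  q7b : ∀ x y z, pd (pd x y) z = pd x (pd y z + sd y z)
  q7c : ∀ x y z, pd (pd x y) z = pd x (pv y z + sd y z)
  q7d : ∀ x y z, pd (pd x y) z = pd x (pd y z + sv y z)
  q8a : ∀ x y z, pd (sd x y) z = sd x (pv y z)
  q8b : ∀ x y z, pd (sd x y) z = sd x (pd y z)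
  q9a : ∀ x y z, sd x (sv y z) = sd x (sd y z)
  q9b : ∀ x y z, sd x (sd y z) = sd (pd x y + sd x y) z

/-- A di-associative algebra `(A, ⊢ = l, ⊣ = r)`. -/
structure IsDiassoc (K : Type*) [Field K] [CharZero K]
    (A : Type*) [AddCommGroup A] [Module K A]
    (l r : A → A → A) : Prop where
  bil_l : IsBilin K l
  bil_r : IsBilin K r
  d1 : ∀ x y z, r (r x y) z = r x (r y z)
  d2 : ∀ x y z, r (r x y) z = r x (l y z)
  d3 : ∀ x y z, r (l x y) z = l x (r y z)
  d4 : ∀ x y z, l (r x y) z = l x (l y z)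
  d5 : ∀ x y z, l (l x y) z = l x (l y z)

/-- A tri-associative algebra `(A, ⊢ = l, ⊣ = r, ⊥ = m)`. -/
structure IsTriassoc (K : Type*) [Field K] [CharZero K]
    (A : Type*) [AddCommGroup A] [Module K A]
    (l r m : A → A → A) : Prop where
  di : IsDiassoc K A l r
  bil_m : IsBilin K m
  massoc : ∀ x y z, m (m x y) z = m x (m y z)
  t1 : ∀ x y z, r (r x y) z = r x (m y z)
  t2 : ∀ x y z, r (m x y) z = m x (r y z)
  t3 : ∀ x y z, m (r x y) z = m x (l y z)
  t4 : ∀ x y z, m (l x y) z = l x (m y z)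
  t5 : ∀ x y z, l (m x y) z = l x (l y z)

/-- An action of a dendriform algebra `(D, p, s)` on a dendriform algebra
`(D', p', s')` via `(pl, sl, pr, sr)`. -/
structure IsDendAction (K : Type*) [Field K] [CharZero K]
    (D : Type*) [AddCommGroup D] [Module K D]
    (D' : Type*) [AddCommGroup D'] [Module K D']
    (p s : D → D → D) (p' s' : D' → D' → D')
    (pl sl : D → D' → D') (pr sr : D' → D → D') : Prop where
  rep : IsDendRep K D D' p s pl sl pr sr
  a1 : ∀ x v w, p' (pl x v) w = pl x (p' v w + s' v w)
  a2 : ∀ x v w, p' (sl x v) w = sl x (p' v w)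
  a3 : ∀ x v w, sl x (s' v w) = s' (pl x v + sl x v) w
  a4 : ∀ u y w, p' (pr u y) w = p' u (pl y w + sl y w)
  a5 : ∀ u y w, p' (sr u y) w = s' u (pl y w)
  a6 : ∀ u y w, s' u (sl y w) = s' (pr u y + sr u y) w
  a7 : ∀ u v z, pr (p' u v) z = p' u (pr v z + sr v z)
  a8 : ∀ u v z, pr (s' u v) z = s' u (pr v z)
  a9 : ∀ u v z, s' u (sr v z) = sr (p' u v + s' u v) z

/-- A six-dendriform algebra
`(D, ≺⊥ = pp, ≻⊥ = sp, ≺⊢ = pv, ≺⊣ = pd, ≻⊢ = sv, ≻⊣ = sd)`. -/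
structure IsSixDendriform (K : Type*) [Field K] [CharZero K]
    (D : Type*) [AddCommGroup D] [Module K D]
    (pp sp pv pd sv sd : D → D → D) : Prop where
  dend : IsDendriform K D pp sp
  quad : IsQuadriDendriform K D pv pd sv sd
  e1 : ∀ x y z, pp (pv x y) z = pv x (pp y z + sp y z)
  e2 : ∀ x y z, pp (sv x y) z = sv x (pp y z)
  e3 : ∀ x y z, sv x (sp y z) = sp (pv x y + sv x y) z
  e4 : ∀ x y z, pp (pd x y) z = pp x (pv y z + sv y z)
  e5 : ∀ x y z, pp (sd x y) z = sp x (pv y z)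
  e6 : ∀ x y z, sp x (sv y z) = sp (pd x y + sd x y) z
  e7 : ∀ x y z, pd (pp x y) z = pp x (pd y z + sd y z)
  e8 : ∀ x y z, pd (sp x y) z = sp x (pd y z)
  e9 : ∀ x y z, sp x (sd y z) = sd (pp x y + sp x y) z
  e10a : ∀ x y z, pv (pp x y) z = pv (pv x y) z
  e10b : ∀ x y z, pv (pv x y) z = pv (pd x y) z
  e11a : ∀ x y z, pv (sp x y) z = pv (sv x y) z
  e11b : ∀ x y z, pv (sv x y) z = pv (sd x y) z
  e12a : ∀ x y z, sv (pp x y) z = sv (pv x y) z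
  e12b : ∀ x y z, sv (pv x y) z = sv (pd x y) z
  e13a : ∀ x y z, sv (sp x y) z = sv (sv x y) z
  e13b : ∀ x y z, sv (sv x y) z = sv (sd x y) z
  e14a : ∀ x y z, pd x (pp y z) = pd x (pv y z)
  e14b : ∀ x y z, pd x (pv y z) = pd x (pd y z)
  e15a : ∀ x y z, sd x (pp y z) = sd x (pv y z)
  e15b : ∀ x y z, sd x (pv y z) = sd x (pd y z)
  e16a : ∀ x y z, pd x (sp y z) = pd x (sv y z)
  e16b : ∀ x y z, pd x (sv y z) = pd x (sd y z)
  e17a : ∀ x y z, sd x (sp y z) = sd x (sv y z)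
  e17b : ∀ x y z, sd x (sv y z) = sd x (sd y z)

/-- An averaging operator on a dendriform algebra `(D, p, s)`. -/
def IsAveraging (K : Type*) [Field K] [CharZero K]
    (D : Type*) [AddCommGroup D] [Module K D]
    (p s : D → D → D) (T : D →ₗ[K] D) : Prop :=
  ∀ x y : D,
    p (T x) (T y) = T (p (T x) y) ∧ p (T x) (T y) = T (p x (T y)) ∧
    s (T x) (T y) = T (s (T x) y) ∧ s (T x) (T y) = T (s x (T y))

/-- A relative averaging operator `T : V → D` on a dendriform algebra `(D, p, s)`
with respect to a representation `(V; pl, sl, pr, sr)`. -/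
def IsRelAveraging (K : Type*) [Field K] [CharZero K]
    (D : Type*) [AddCommGroup D] [Module K D]
    (V : Type*) [AddCommGroup V] [Module K V]
    (p s : D → D → D)
    (pl sl : D → V → V) (pr sr : V → D → V)
    (T : V →ₗ[K] D) : Prop :=
  ∀ u v : V,
    p (T u) (T v) = T (pl (T u) v) ∧ p (T u) (T v) = T (pr u (T v)) ∧
    s (T u) (T v) = T (sl (T u) v) ∧ s (T u) (T v) = T (sr u (T v))



lemma IsBilin.zero_left {K : Type*} [Field K] {A B C : Type*}
    [AddCommGroup A] [Module K A] [AddCommGroup B] [Module K B]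
    [AddCommGroup C] [Module K C] {f : A → B → C} (h : IsBilin K f) (b : B) :
    f 0 b = 0 := by
  have := h.1 0 0 b; simpa using this.symm

lemma IsBilin.zero_right {K : Type*} [Field K] {A B C : Type*}
    [AddCommGroup A] [Module K A] [AddCommGroup B] [Module K B]
    [AddCommGroup C] [Module K C] {f : A → B → C} (h : IsBilin K f) (a : A) :
    f a 0 = 0 := by
  have := h.2.2.1 a 0 0; simpa using this.symm

theorem stmt_14 (K : Type*) [Field K] [CharZero K]
    (D : Type*) [AddCommGroup D] [Module K D]
    (V : Type*) [AddCommGroup V] [Module K V]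
    (p s : D → D → D) (pl sl : D → V → V) (pr sr : V → D → V)
    (hD : IsDendriform K D p s)
    (hV : IsDendRep K D V p s pl sl pr sr)
    (T : V →ₗ[K] D)
    (hT : IsRelAveraging K D V p s pl sl pr sr T) :
    Function.Injective (fun u : V => (((0 : D), u) : D × V)) ∧
    ∀ u v : V,
      (((0 : D), pl (T u) v) : D × V) =
        (fun a b : D × V => ((p a.1 b.1, pl a.1 b.2 + pr a.2 b.1) : D × V))
          ((fun a : D × V => ((T a.2, (0 : V)) : D × V)) ((0 : D), u)) ((0 : D), v) ∧
      (((0 : D), pr u (T v)) : D × V) =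
        (fun a b : D × V => ((p a.1 b.1, pl a.1 b.2 + pr a.2 b.1) : D × V))
          ((0 : D), u) ((fun a : D × V => ((T a.2, (0 : V)) : D × V)) ((0 : D), v)) ∧
      (((0 : D), sl (T u) v) : D × V) =
        (fun a b : D × V => ((s a.1 b.1, sl a.1 b.2 + sr a.2 b.1) : D × V))
          ((fun a : D × V => ((T a.2, (0 : V)) : D × V)) ((0 : D), u)) ((0 : D), v) ∧
      (((0 : D), sr u (T v)) : D × V) =
        (fun a b : D × V => ((s a.1 b.1, sl a.1 b.2 + sr a.2 b.1) : D × V))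
          ((0 : D), u) ((fun a : D × V => ((T a.2, (0 : V)) : D × V)) ((0 : D), v)) := by
  constructor
  · intro u v h
    simpa using congrArg Prod.snd h
  · intro u v
    refine ⟨?_, ?_, ?_, ?_⟩ <;> simp only [Prod.mk.injEq] <;> constructor
    · exact (hD.bil_p.zero_right (T u)).symm
    · rw [hV.bil_pr.zero_left]; abel
    · exact (hD.bil_p.zero_left (T v)).symm
    · rw [hV.bil_pl.zero_right]; abel
    · exact (hD.bil_s.zero_right (T u)).symm
    · rw [hV.bil_sr.zero_left]; abel
    · exact (hD.bil_s.zero_left (T v)).symm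
    · rw [hV.bil_sl.zero_right]; abel
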